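/- arXiv:math/0411062 — 8 statements merged into one kernel-verified Lean document; each statement's English description precedes it below -/
import Mathlib

section
/- With u_t^{(k)} = exp(z_k B_t − (Re z_k)^2 t) for k = 1,2,3 and z_1,z_2,z_3 ∈ ℂ, the product ⟨u_t^{(1)},u_t^{(2)}⟩⟨u_t^{(2)},u_t^{(3)}⟩⟨u_t^{(3)},u_t^{(1)}⟩ divided by its absolute value equals exp(i t S(z_1,z_2,z_3)), where S(z_1,z_2,z_3) = Im((z_2−z_1)·conj(z_3−z_1)) is twice the signed area of the triangle with vertices z_1,z_2,z_3. -/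
/-!
Each inner product `⟨u^{(j)}, u^{(k)}⟩` is, up to a constant factor, the Gaussian moment
generating function of `B_t` at `z_j + conj z_k`, hence the exponential of an explicit
quadratic expression. The normalized product is therefore `exp (i Im E)` for the sum `E` of the
three exponents; the `(Re z)²` terms are real, and in the imaginary parts of the squares
`(z_j + conj z_k)²` the terms `Im z_j²` and `Im (conj z_k)²` cancel cyclically, leaving
`t Im (z₁ conj z₂ + z₂ conj z₃ + z₃ conj z₁) = t S(z₁, z₂, z₃)`.
-/

open MeasureTheory ComplexConjugate

namespace Complex

theorem exp_div_norm_exp (w : ℂ) : exp w / (‖exp w‖ : ℂ) = exp (I * w.im) := by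
  rw [norm_exp, ofReal_exp, ← exp_sub]
  congr 1
  apply Complex.ext <;> simp

theorem im_cyclic_sum_sq_add_conj (z₁ z₂ z₃ : ℂ) :
    ((z₁ + conj z₂) ^ 2 + (z₂ + conj z₃) ^ 2 + (z₃ + conj z₁) ^ 2).im / 2
      = ((z₂ - z₁) * conj (z₃ - z₁)).im := by
  simp only [add_im, add_re, mul_im, sub_im, sub_re, conj_re, conj_im, pow_two]
  ring

end Complex

section GaussianMGF

variable {Ω : Type*} [MeasurableSpace Ω] {μ : Measure Ω}

theorem integral_exp_mul_conj_exp_of_gaussian_mgf {X : Ω → ℝ} {s : ℝ}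
    (hX : ∀ w : ℂ, ∫ ω, Complex.exp (w * X ω) ∂μ = Complex.exp (w ^ 2 * s / 2)) (a b c d : ℂ) :
    ∫ ω, Complex.exp (a * X ω - c) * conj (Complex.exp (b * X ω - d)) ∂μ
      = Complex.exp ((a + conj b) ^ 2 * s / 2 - c - conj d) := by
  have hprod : ∀ ω, Complex.exp (a * X ω - c) * conj (Complex.exp (b * X ω - d))
      = Complex.exp ((a + conj b) * X ω) * Complex.exp (-c - conj d) := by
    intro ω
    rw [← Complex.exp_conj, ← Complex.exp_add, ← Complex.exp_add]
    congr 1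
    simp only [map_sub, map_mul, Complex.conj_ofReal]
    ring
  simp_rw [hprod]
  rw [integral_mul_const, hX, ← Complex.exp_add]
  ring_nf

end GaussianMGF

theorem stmt_2_general {Ω : Type*} [MeasurableSpace Ω] (μ : Measure Ω)
    (B : ℝ → Ω → ℝ)
    (hB : ∀ t : ℝ, 0 < t → ∀ w : ℂ,
      ∫ ω, Complex.exp (w * B t ω) ∂μ = Complex.exp (w ^ 2 * t / 2))
    (z₁ z₂ z₃ : ℂ) (t : ℝ) (ht : 0 < t)
    (ip : ℂ → ℂ → ℂ)
    (hip : ∀ zj zk : ℂ, ip zj zk =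
      ∫ ω, Complex.exp (zj * B t ω - (zj.re : ℂ) ^ 2 * t) *
        (starRingEnd ℂ) (Complex.exp (zk * B t ω - (zk.re : ℂ) ^ 2 * t)) ∂μ) :
    (ip z₁ z₂ * ip z₂ z₃ * ip z₃ z₁) /
        ((‖ip z₁ z₂ * ip z₂ z₃ * ip z₃ z₁‖ : ℝ) : ℂ)
      = Complex.exp (Complex.I * t * (((z₂ - z₁) * (starRingEnd ℂ) (z₃ - z₁)).im : ℝ)) := by
  simp only [hip, integral_exp_mul_conj_exp_of_gaussian_mgf (hB t ht), ← Complex.exp_add,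
    Complex.exp_div_norm_exp, ← Complex.im_cyclic_sum_sq_add_conj]
  congr 1
  simp only [← Complex.ofReal_pow, ← Complex.ofReal_mul, Complex.conj_ofReal, Complex.add_im,
    Complex.sub_im, Complex.ofReal_im, Complex.div_ofNat_im, Complex.im_mul_ofReal]
  push_cast
  ring

/-- the product of the three pairwise inner products of the normalized
units `u_t^{(k)} = exp(z_k B_t − (Re z_k)² t)`, divided by its absolute value, equals
`exp(i t S(z₁,z₂,z₃))` with `S(z₁,z₂,z₃) = Im((z₂−z₁) conj(z₃−z₁))`. -/
theorem stmt_2 {Ω : Type*} [MeasurableSpace Ω] (μ : Measure Ω) [IsProbabilityMeasure μ]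
    (B : ℝ → Ω → ℝ)
    (hB : ∀ t : ℝ, 0 < t → ∀ w : ℂ,
      ∫ ω, Complex.exp (w * B t ω) ∂μ = Complex.exp (w ^ 2 * t / 2))
    (z₁ z₂ z₃ : ℂ) (t : ℝ) (ht : 0 < t)
    (ip : ℂ → ℂ → ℂ)
    (hip : ∀ zj zk : ℂ, ip zj zk =
      ∫ ω, Complex.exp (zj * B t ω - (zj.re : ℂ) ^ 2 * t) *
        (starRingEnd ℂ) (Complex.exp (zk * B t ω - (zk.re : ℂ) ^ 2 * t)) ∂μ)
    (h12 : ip z₁ z₂ ≠ 0) (h23 : ip z₂ z₃ ≠ 0) (h31 : ip z₃ z₁ ≠ 0) :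
    (ip z₁ z₂ * ip z₂ z₃ * ip z₃ z₁) /
        ((‖ip z₁ z₂ * ip z₂ z₃ * ip z₃ z₁‖ : ℝ) : ℂ)
      = Complex.exp (Complex.I * t * (((z₂ - z₁) * (starRingEnd ℂ) (z₃ - z₁)).im : ℝ)) :=
  stmt_2_general μ B hB z₁ z₂ z₃ t ht ip hip
end

section
/- Call a probability measure ν on ℝ ε-good (for ε > 0) if there exists x ∈ ℝ such that ν(A) ≥ ε·Leb(A ∩ (x, x+ε)) for all Borel sets A ⊆ ℝ. Suppose h : ℝ → {−1,+1} is measurable and periodic with period p, and let M = (1/p)∫_0^p h(x)dx denote the mean of h over one period. If the period p satisfies Np ≤ ε < (N+1)p for an integer N ≥ 2, then for every ε-good measure ν, ν(h^{-1}({−1})) ≥ ε^2 · (N−1)/(N+1) · (1−M)/2. -/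
open MeasureTheory ENNReal

/-- if `ν` is `ε`-good, `h` is `±1`-valued and `p`-periodic with mean `M`
over a period, and `N p ≤ ε < (N+1) p` with `N ≥ 2`, then
`ν(h⁻¹({−1})) ≥ ε² (N−1)/(N+1) (1−M)/2`. -/
theorem stmt_6 (ν : Measure ℝ) [IsProbabilityMeasure ν] (ε p M : ℝ) (N : ℕ)
    (h : ℝ → ℝ) (hmeas : Measurable h) (hval : ∀ x, h x = -1 ∨ h x = 1)
    (hp : 0 < p) (hper : ∀ x, h (x + p) = h x)
    (hM : M = (1 / p) * ∫ x in (0:ℝ)..p, h x)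
    (hN : 2 ≤ N) (hNp : (N : ℝ) * p ≤ ε) (hNp' : ε < ((N : ℝ) + 1) * p)
    (hgood : ∃ x₀ : ℝ, ∀ A : Set ℝ, MeasurableSet A →
      ENNReal.ofReal ε * volume (A ∩ Set.Ioo x₀ (x₀ + ε)) ≤ ν A) :
    ENNReal.ofReal (ε ^ 2 * ((N : ℝ) - 1) / ((N : ℝ) + 1) * (1 - M) / 2)
      ≤ ν (h ⁻¹' {-1}) := by
  obtain ⟨x₀, hx₀⟩ := hgood
  set S := h ⁻¹' {-1} with hSdef
  have hS : MeasurableSet S := hmeas (measurableSet_singleton _)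
  have hNR : (2:ℝ) ≤ (N:ℝ) := by exact_mod_cast hN
  have hε : 0 < ε := lt_of_lt_of_le (by nlinarith) hNp
  have hper' : Function.Periodic h p := hper
  -- pointwise identity h = 1 - 2 * indicator S
  have hpt : h = fun x => 1 - 2 * S.indicator (fun _ => (1:ℝ)) x := by
    funext x
    rcases hval x with h1 | h1
    · have hx : x ∈ S := by simp [hSdef, Set.mem_preimage, h1]
      simp [Set.indicator_of_mem hx, h1]; norm_num
    · have hx : x ∉ S := by simp [hSdef, Set.mem_preimage, h1]; norm_num
      simp [Set.indicator_of_notMem hx, h1]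
  have habs : ∀ x, ‖h x‖ ≤ 1 := by intro x; rcases hval x with h1 | h1 <;> simp [h1]
  have hintg : ∀ a b : ℝ, IntervalIntegrable h volume a b := by
    intro a b
    rw [intervalIntegrable_iff]
    have hfin : volume (Set.uIoc a b) < ⊤ := by
      rw [Set.uIoc]; exact measure_Ioc_lt_top
    exact (integrableOn_const hfin.ne).mono'
      hmeas.aestronglyMeasurable (ae_of_all _ habs)
  -- M ≤ 1
  have hMle : M ≤ 1 := by
    have hle : ∫ x in (0:ℝ)..p, h x ≤ ∫ x in (0:ℝ)..p, (1:ℝ) := by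
      apply intervalIntegral.integral_mono_on hp.le (hintg 0 p) intervalIntegrable_const
      intro x _
      have := habs x
      rw [Real.norm_eq_abs, abs_le] at this
      exact this.2
    rw [intervalIntegral.integral_const] at hle
    simp at hle
    rw [hM]
    rw [one_div, inv_mul_le_iff₀ hp] at *
    · linarith
  have hM1 : 0 ≤ p * (1 - M) / 2 := by nlinarith
  -- each period interval contributes p(1-M)/2
  have key : ∀ t : ℝ, volume (S ∩ Set.Ioc t (t + p))
      = ENNReal.ofReal (p * (1 - M) / 2) := by
    intro t
    have hfin : volume (S ∩ Set.Ioc t (t + p)) < ⊤ :=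
      lt_of_le_of_lt (measure_mono Set.inter_subset_right) measure_Ioc_lt_top
    have hint1 : ∫ x in t..(t + p), h x = p * M := by
      rw [hper'.intervalIntegral_add_eq t 0]
      simp only [zero_add]
      rw [hM]; field_simp
    have hle : t ≤ t + p := by linarith
    have hindint : IntegrableOn (S.indicator (fun _ => (1:ℝ))) (Set.Ioc t (t + p)) volume :=
      (integrableOn_const measure_Ioc_lt_top.ne).indicator hS
    have h2 : ∫ x in t..(t + p), h x
        = p - 2 * (volume (S ∩ Set.Ioc t (t + p))).toReal := by
      rw [intervalIntegral.integral_of_le hle]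
      conv_lhs => rw [hpt]
      rw [MeasureTheory.integral_sub (show IntegrableOn (fun _ => (1:ℝ)) (Set.Ioc t (t + p)) volume from integrableOn_const measure_Ioc_lt_top.ne)
        (hindint.const_mul 2)]
      rw [MeasureTheory.integral_const_mul, MeasureTheory.integral_indicator_const _ hS]
      simp [Measure.restrict_apply hS, Real.volume_Ioc, hp.le, Measure.real]
    have htR : (volume (S ∩ Set.Ioc t (t + p))).toReal = p * (1 - M) / 2 := by
      have := h2.symm.trans hint1
      linarith
    rw [← htR, ENNReal.ofReal_toReal hfin.ne]
  -- multi-period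
  have multi : ∀ (n : ℕ) (t : ℝ), volume (S ∩ Set.Ioc t (t + n * p))
      = (n : ℝ≥0∞) * ENNReal.ofReal (p * (1 - M) / 2) := by
    intro n
    induction n with
    | zero => intro t; simp
    | succ n ih =>
      intro t
      have h1 : t ≤ t + n * p := by
        have : (0:ℝ) ≤ n * p := by positivity
        linarith
      have h2 : t + n * p ≤ t + ((n:ℝ) + 1) * p := by nlinarith
      have hsplit : Set.Ioc t (t + ((n:ℕ)+1 : ℕ) * p)
          = Set.Ioc t (t + n * p) ∪ Set.Ioc (t + n * p) ((t + n * p) + p) := by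
        rw [Set.Ioc_union_Ioc_eq_Ioc h1 (by linarith)]
        push_cast
        ring_nf
      have hdisj : Disjoint (S ∩ Set.Ioc t (t + n * p))
          (S ∩ Set.Ioc (t + n * p) ((t + n * p) + p)) := by
        apply Disjoint.mono Set.inter_subset_right Set.inter_subset_right
        rw [Set.Ioc_disjoint_Ioc]
        simp [le_max_iff]
      rw [hsplit, Set.inter_union_distrib_left,
        measure_union hdisj (hS.inter measurableSet_Ioc), ih, key]
      push_cast
      ring
  -- Ioc and Ioo have the same S-volume
  have iooioc : ∀ a b : ℝ, volume (S ∩ Set.Ioc a b) = volume (S ∩ Set.Ioo a b) := by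
    intro a b
    apply le_antisymm
    · calc volume (S ∩ Set.Ioc a b) ≤ volume ((S ∩ Set.Ioo a b) ∪ {b}) := by
            apply measure_mono
            rintro y ⟨hyS, hy1, hy2⟩
            rcases lt_or_eq_of_le hy2 with h' | h'
            · exact Or.inl ⟨hyS, hy1, h'⟩
            · exact Or.inr h'
        _ ≤ volume (S ∩ Set.Ioo a b) + volume ({b} : Set ℝ) := measure_union_le _ _
        _ = volume (S ∩ Set.Ioo a b) := by simp
    · exact measure_mono (Set.inter_subset_inter_right _ Set.Ioo_subset_Ioc_self)
  -- assemble
  obtain ⟨K, hKdef⟩ : ∃ K, N = K + 1 := ⟨N - 1, by omega⟩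
  have hK1 : 1 ≤ K := by omega
  have hKR : (1:ℝ) ≤ (K:ℝ) := by exact_mod_cast hK1
  have hNK : (N:ℝ) = (K:ℝ) + 1 := by rw [hKdef]; push_cast; ring
  have hvol : (K : ℝ≥0∞) * ENNReal.ofReal (p * (1 - M) / 2)
      ≤ volume (S ∩ Set.Ioo x₀ (x₀ + ε)) := by
    rw [← multi K (x₀ + p), iooioc]
    apply measure_mono
    apply Set.inter_subset_inter_right
    apply Set.Ioo_subset_Ioo (by linarith)
    nlinarith
  have main : ENNReal.ofReal ε * volume (S ∩ Set.Ioo x₀ (x₀ + ε)) ≤ ν S := hx₀ S hS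
  calc ENNReal.ofReal (ε ^ 2 * ((N : ℝ) - 1) / ((N : ℝ) + 1) * (1 - M) / 2)
      ≤ ENNReal.ofReal (ε * ((K:ℝ) * (p * (1 - M) / 2))) := by
        apply ENNReal.ofReal_le_ofReal
        have h1M : 0 ≤ 1 - M := by linarith
        have hprod : 0 ≤ (ε * (K:ℝ) * (1 - M)) * (((K:ℝ) + 2) * p - ε) := by
          apply mul_nonneg (mul_nonneg (mul_nonneg hε.le (Nat.cast_nonneg K)) h1M)
          nlinarith [hNp']
        rw [hNK, div_mul_eq_mul_div, div_div,
          div_le_iff₀ (by positivity)]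
        nlinarith [hprod]
    _ = ENNReal.ofReal ε * ((K : ℝ≥0∞) * ENNReal.ofReal (p * (1 - M) / 2)) := by
        rw [ENNReal.ofReal_mul hε.le, ENNReal.ofReal_mul (by positivity)]
        simp [ENNReal.ofReal_natCast]
    _ ≤ ENNReal.ofReal ε * volume (S ∩ Set.Ioo x₀ (x₀ + ε)) :=
        mul_le_mul_right hvol _
    _ ≤ ν S := main
end

section
/- There exists ε > 0 such that for all a, b ∈ (0, ∞), the function p_{a,b}(x) = (1 − e^{−2ax})(1 − e^{−2bx})/(1 − e^{−ab}) · (1/√π) · exp(−(x − (a+b)/2)^2) satisfies inf over a,b ∈ (0,∞) and x ∈ [(a+b)/2 + 1, (a+b)/2 + 2] of p_{a,b}(x) is strictly positive. -/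
/-!
Write `f s = 1 - exp (-s)`. Since `f` is concave with `f 0 = 0`, `f s ≤ s` and `f s ≤ 1`, it is
comparable to `min s 1` up to the factor `f 1`. For `a, b ≤ y` and `1 ≤ y` one has
`min (a b) 1 ≤ min (a y) 1 · min (b y) 1`, so with `y = 2x` the prefactor of the density is
at least `(f 1)²` whenever `x ≥ 1` and `x ≥ (a+b)/2`. On the window the Gaussian factor is at
least `e⁻⁴`, and `1/√π ≥ 1/2`.
-/

open Real

lemma one_sub_exp_neg_le_min (s : ℝ) : 1 - exp (-s) ≤ min s 1 :=
  le_min (by linarith [add_one_le_exp (-s)]) (by linarith [exp_pos (-s)])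

lemma one_sub_exp_neg_one_mul_min_le {s : ℝ} (hs : 0 ≤ s) :
    (1 - exp (-1)) * min s 1 ≤ 1 - exp (-s) := by
  rcases le_total s 1 with hs1 | hs1
  · -- convexity of `exp` on the segment from `0` to `-1`
    have hconv := convexOn_exp.2 (Set.mem_univ (-1)) (Set.mem_univ 0) hs (sub_nonneg.2 hs1)
      (add_sub_cancel s 1)
    simp only [smul_eq_mul, mul_zero, add_zero, exp_zero, mul_one, mul_neg_one] at hconv
    rw [min_eq_left hs1]
    linarith
  · rw [min_eq_right hs1, mul_one]
    linarith [exp_le_exp.2 (neg_le_neg hs1)]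

lemma min_mul_one_le_mul_min_one {a b y : ℝ} (ha : 0 ≤ a) (hb : 0 ≤ b) (hay : a ≤ y)
    (hby : b ≤ y) (hy : 1 ≤ y) :
    min (a * b) 1 ≤ min (a * y) 1 * min (b * y) 1 := by
  rcases le_total 1 a with ha1 | ha1
  · rw [min_eq_right (by nlinarith : 1 ≤ a * y), one_mul, mul_comm a b]
    exact min_le_min_right 1 (mul_le_mul_of_nonneg_left hay hb)
  rcases le_total 1 b with hb1 | hb1
  · rw [min_eq_right (by nlinarith : 1 ≤ b * y), mul_one]
    exact min_le_min_right 1 (mul_le_mul_of_nonneg_left hby ha)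
  have hay' : a ≤ min (a * y) 1 := le_min (le_mul_of_one_le_right ha hy) ha1
  have hby' : b ≤ min (b * y) 1 := le_min (le_mul_of_one_le_right hb hy) hb1
  exact (min_le_left _ _).trans (mul_le_mul hay' hby' hb (ha.trans hay'))

lemma sq_one_sub_exp_neg_one_le_div {a b y : ℝ} (ha : 0 < a) (hb : 0 < b) (hay : a ≤ y)
    (hby : b ≤ y) (hy : 1 ≤ y) :
    (1 - exp (-1)) ^ 2 ≤
      (1 - exp (-(a * y))) * (1 - exp (-(b * y))) / (1 - exp (-(a * b))) := by
  set c := 1 - exp (-1)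
  have hc : 0 ≤ c := by linarith [exp_le_one_iff.2 (neg_nonpos.2 zero_le_one)]
  have hden : 0 < 1 - exp (-(a * b)) := sub_pos.2 (exp_lt_one_iff.2 (by nlinarith))
  rw [le_div_iff₀ hden]
  calc c ^ 2 * (1 - exp (-(a * b)))
      ≤ c ^ 2 * (min (a * y) 1 * min (b * y) 1) :=
        mul_le_mul_of_nonneg_left ((one_sub_exp_neg_le_min _).trans
          (min_mul_one_le_mul_min_one ha.le hb.le hay hby hy)) (sq_nonneg c)
    _ = (c * min (a * y) 1) * (c * min (b * y) 1) := by ring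
    _ ≤ (1 - exp (-(a * y))) * (1 - exp (-(b * y))) :=
        mul_le_mul (one_sub_exp_neg_one_mul_min_le (by nlinarith))
          (one_sub_exp_neg_one_mul_min_le (by nlinarith)) (by positivity)
          (by linarith [exp_le_one_iff.2 (neg_nonpos.2 (by nlinarith : 0 ≤ a * y))])

lemma inv_two_le_inv_sqrt_pi : (2 : ℝ)⁻¹ ≤ (√π)⁻¹ := by
  have hsqrt : √π ≤ 2 := by
    rw [sqrt_le_left (by norm_num)]
    linarith [pi_le_four]
  exact inv_anti₀ (sqrt_pos.2 pi_pos) hsqrt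

/-- Lemma 6.3: uniform positivity of the density
`p_{a,b}(x) = (1−e^{−2ax})(1−e^{−2bx})/(1−e^{−ab}) · π^{−1/2} exp(−(x−(a+b)/2)²)`
on the window `[(a+b)/2+1, (a+b)/2+2]`, uniformly in `a, b > 0`. -/
theorem stmt_7 :
    ∃ δ : ℝ, 0 < δ ∧ ∀ a b x : ℝ, 0 < a → 0 < b →
      x ∈ Set.Icc ((a + b) / 2 + 1) ((a + b) / 2 + 2) →
      δ ≤ (1 - Real.exp (-2 * a * x)) * (1 - Real.exp (-2 * b * x)) /
            (1 - Real.exp (-(a * b))) * (Real.sqrt Real.pi)⁻¹ *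
            Real.exp (-(x - (a + b) / 2) ^ 2) := by
  have hc : 0 < 1 - exp (-1) := sub_pos.2 (exp_lt_one_iff.2 (by norm_num))
  refine ⟨(1 - exp (-1)) ^ 2 * 2⁻¹ * exp (-4), by positivity, fun a b x ha hb ⟨hxl, hxr⟩ => ?_⟩
  have hprefactor := sq_one_sub_exp_neg_one_le_div (y := 2 * x) ha hb
    (by linarith) (by linarith) (by linarith)
  rw [show -(a * (2 * x)) = -2 * a * x by ring, show -(b * (2 * x)) = -2 * b * x by ring]
    at hprefactor
  have hgauss : exp (-4) ≤ exp (-(x - (a + b) / 2) ^ 2) :=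
    exp_le_exp.2 (by nlinarith)
  have hprefactor_nonneg := (sq_nonneg _).trans hprefactor
  gcongr ?_ * ?_ * ?_
  exact inv_two_le_inv_sqrt_pi
end

section
/- Let (Ω_n, β_n)_{n≥1} be an inductive system of probability spaces (β_n : Ω_n → Ω_{n+1} measure preserving), and let G be the abelian group of sequences f = (f_n)_n of measurable functions f_n : Ω_n → {−1,+1} (mod null sets) under pointwise multiplication, with shift homomorphism T defined by (Tf)_n(ω) = f_{n+1}(β_n(ω)). Given X, Y ∈ G, the binary extensions of (Ω_n, β_n)_n determined by X and by Y (via ω̃_n = (ω_n, s_n) ∈ Ω_n × {±1}, β̃_n(ω_n,s_n) = (β_n(ω_n), s_n X_n(ω_n)) resp. with Y_n) are isomorphic if and only if there exists U ∈ G with X·T(U) = Y·U. -/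
/-!
An isomorphism of binary extensions is fibre-preserving and invertible, so on almost every fibre
`{ω} × ZMod 2` it is a bijection of the two signs, i.e. a translation `s ↦ s + U ω`. Writing the
isomorphism as this gauge transformation, commuting with the skew products is exactly the
cohomology equation `X + U ∘ β = Y + U`; conversely every solution `U` gives such a gauge
transformation, which is its own inverse.
-/

open MeasureTheory

/-- The two-point sign space, encoded additively as `ZMod 2` (`0 ↔ +1`, `1 ↔ −1`). -/
instance : MeasurableSpace (ZMod 2) := ⊤

/-- The uniform (half–half) probability measure on the two signs. -/
noncomputable def binMeasure : Measure (ZMod 2) := (PMF.uniformOfFintype (ZMod 2)).toMeasure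

instance : IsProbabilityMeasure binMeasure := by unfold binMeasure; infer_instance

instance : DiscreteMeasurableSpace (ZMod 2) := ⟨fun _ => MeasurableSpace.measurableSet_top⟩

lemma ZMod.apply_eq_add_apply_zero_of_injective {f : ZMod 2 → ZMod 2} (hf : f.Injective)
    (s : ZMod 2) : f s = s + f 0 := by
  revert f s
  decide

lemma binMeasure_singleton (s : ZMod 2) : binMeasure {s} = 2⁻¹ := by
  rw [binMeasure, PMF.toMeasure_apply_singleton _ _ (measurableSet_singleton s)]
  simp [PMF.uniformOfFintype_apply]

lemma ae_binMeasure_iff {p : ZMod 2 → Prop} : (∀ᵐ s ∂binMeasure, p s) ↔ ∀ s, p s := by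
  simp [ae_iff_of_countable, binMeasure_singleton]

lemma binMeasure_map_add (c : ZMod 2) : binMeasure.map (· + c) = binMeasure := by
  refine Measure.ext_of_singleton fun s => ?_
  rw [Measure.map_apply (measurable_add_const c) (measurableSet_singleton s)]
  have hpre : (· + c) ⁻¹' {s} = {s - c} := by
    ext; simp only [Set.mem_preimage, Set.mem_singleton_iff, eq_sub_iff_add_eq]
  rw [hpre, binMeasure_singleton, binMeasure_singleton]

section BinaryExtension

variable {α β : Type*}

def signShift (U : α → ZMod 2) (q : α × ZMod 2) : α × ZMod 2 := (q.1, q.2 + U q.1)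

/-- The map `β̃` of the binary extension determined by `X`. -/
def skewProduct (b : α → β) (X : α → ZMod 2) (q : α × ZMod 2) : β × ZMod 2 :=
  (b q.1, q.2 + X q.1)

@[simp]
lemma signShift_signShift (U : α → ZMod 2) (q : α × ZMod 2) :
    signShift U (signShift U q) = q := by
  simp [signShift, add_assoc, CharTwo.add_self_eq_zero]

lemma signShift_skewProduct_iff (b : α → β) (X Y U : α → ZMod 2)
    (V : β → ZMod 2) (q : α × ZMod 2) :
    signShift V (skewProduct b X q) = skewProduct b Y (signShift U q) ↔
      X q.1 + V (b q.1) = Y q.1 + U q.1 := by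
  simp only [signShift, skewProduct, Prod.mk.injEq, true_and, add_assoc, add_right_inj]
  rw [add_comm (U q.1)]

variable [MeasurableSpace α] {μ : Measure α}

lemma measurePreserving_signShift [SFinite μ] {U : α → ZMod 2} (hU : Measurable U) :
    MeasurePreserving (signShift U) (μ.prod binMeasure) (μ.prod binMeasure) :=
  (MeasurePreserving.id μ).skew_product (g := fun ω s => s + U ω)
    ((measurable_of_countable fun p : ZMod 2 × ZMod 2 => p.1 + p.2).comp
      (measurable_snd.prodMk (hU.comp measurable_fst)))
    (.of_forall fun ω => binMeasure_map_add (U ω))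

lemma ae_eq_signShift_of_leftInverse {θ θinv : α × ZMod 2 → α × ZMod 2}
    (hinv : ∀ᵐ q ∂μ.prod binMeasure, θinv (θ q) = q)
    (hfst : ∀ᵐ q ∂μ.prod binMeasure, (θ q).1 = q.1) :
    ∀ᵐ ω ∂μ, ∀ s, θ (ω, s) = signShift (fun ω => (θ (ω, 0)).2) (ω, s) := by
  filter_upwards [Measure.ae_ae_of_ae_prod hinv, Measure.ae_ae_of_ae_prod hfst] with ω hinvω hfstω
  rw [ae_binMeasure_iff] at hinvω hfstω
  have hfibre : ∀ s, θ (ω, s) = (ω, (θ (ω, s)).2) := fun s => Prod.ext (hfstω s) rfl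
  have hinj : (fun s => (θ (ω, s)).2).Injective := fun s t hst => by
    have h := congrArg θinv (((hfibre s).trans (congrArg _ hst)).trans (hfibre t).symm)
    simpa [hinvω] using h
  intro s
  rw [hfibre s, signShift, ZMod.apply_eq_add_apply_zero_of_injective hinj s]

end BinaryExtension

theorem stmt_9_general (Ω : ℕ → Type*) [∀ n, MeasurableSpace (Ω n)]
    (μ : ∀ n, Measure (Ω n)) [∀ n, IsProbabilityMeasure (μ n)]
    (β : ∀ n, Ω n → Ω (n + 1))
    (hβ : ∀ n, MeasurePreserving (β n) (μ n) (μ (n + 1)))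
    (X Y : ∀ n, Ω n → ZMod 2) :
    (∃ θ θinv : ∀ n, Ω n × ZMod 2 → Ω n × ZMod 2,
      (∀ n, MeasurePreserving (θ n) ((μ n).prod binMeasure) ((μ n).prod binMeasure)) ∧
      (∀ n, MeasurePreserving (θinv n) ((μ n).prod binMeasure) ((μ n).prod binMeasure)) ∧
      (∀ n, ∀ᵐ q ∂((μ n).prod binMeasure), θinv n (θ n q) = q) ∧
      (∀ n, ∀ᵐ q ∂((μ n).prod binMeasure), θ n (θinv n q) = q) ∧
      -- `θ_n` commutes with the projections `γ_n`
      (∀ n, ∀ᵐ q ∂((μ n).prod binMeasure), (θ n q).1 = q.1) ∧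
      -- `θ_{n+1} ∘ β̃_n = β̃'_n ∘ θ_n`, where `β̃_n(ω,s) = (β_n ω, s + X_n ω)` etc.
      (∀ n, ∀ᵐ q ∂((μ n).prod binMeasure),
        θ (n + 1) (β n q.1, q.2 + X n q.1) = (β n (θ n q).1, (θ n q).2 + Y n (θ n q).1)))
    ↔
    (∃ U : ∀ n, Ω n → ZMod 2, (∀ n, Measurable (U n)) ∧
      ∀ n, ∀ᵐ ω ∂(μ n), X n ω + U (n + 1) (β n ω) = Y n ω + U n ω) := by
  constructor
  · rintro ⟨θ, θinv, hθ, -, hinv, -, hfst, hcomm⟩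
    have hgauge n := ae_eq_signShift_of_leftInverse (hinv n) (hfst n)
    refine ⟨fun n ω => (θ n (ω, 0)).2,
      fun n => measurable_snd.comp ((hθ n).measurable.comp measurable_prodMk_right), fun n => ?_⟩
    filter_upwards [Measure.ae_ae_of_ae_prod (hcomm n), hgauge n,
      (hβ n).quasiMeasurePreserving.ae (hgauge (n + 1))] with ω hcommω hgaugeω hgaugeβω
    have hcomm₀ := ae_binMeasure_iff.mp hcommω 0
    rw [hgaugeω, hgaugeβω] at hcomm₀
    exact (signShift_skewProduct_iff (β n) (X n) (Y n) _ _ (ω, 0)).mp hcomm₀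
  · rintro ⟨U, hU, hcohom⟩
    refine ⟨fun n => signShift (U n), fun n => signShift (U n),
      fun n => measurePreserving_signShift (hU n), fun n => measurePreserving_signShift (hU n),
      fun n => .of_forall (signShift_signShift _), fun n => .of_forall (signShift_signShift _),
      fun n => .of_forall fun _ => rfl, fun n => ?_⟩
    filter_upwards [Measure.quasiMeasurePreserving_fst.ae (hcohom n)] with q hq
    exact (signShift_skewProduct_iff (β n) (X n) (Y n) (U n) (U (n + 1)) q).mpr hq

/-- Lemma 5.6: the binary extensions of the inductive system
`(Ω_n, β_n)` determined by `X` and by `Y` are isomorphic iff there exists `U` with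
`X · T(U) = Y · U` (written additively in `ZMod 2`). -/
theorem stmt_9 (Ω : ℕ → Type*) [∀ n, MeasurableSpace (Ω n)] [∀ n, StandardBorelSpace (Ω n)]
    (μ : ∀ n, Measure (Ω n)) [∀ n, IsProbabilityMeasure (μ n)]
    (β : ∀ n, Ω n → Ω (n + 1))
    (hβ : ∀ n, MeasurePreserving (β n) (μ n) (μ (n + 1)))
    (X Y : ∀ n, Ω n → ZMod 2)
    (hX : ∀ n, Measurable (X n)) (hY : ∀ n, Measurable (Y n)) :
    (∃ θ θinv : ∀ n, Ω n × ZMod 2 → Ω n × ZMod 2,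
      (∀ n, MeasurePreserving (θ n) ((μ n).prod binMeasure) ((μ n).prod binMeasure)) ∧
      (∀ n, MeasurePreserving (θinv n) ((μ n).prod binMeasure) ((μ n).prod binMeasure)) ∧
      (∀ n, ∀ᵐ q ∂((μ n).prod binMeasure), θinv n (θ n q) = q) ∧
      (∀ n, ∀ᵐ q ∂((μ n).prod binMeasure), θ n (θinv n q) = q) ∧
      -- `θ_n` commutes with the projections `γ_n`
      (∀ n, ∀ᵐ q ∂((μ n).prod binMeasure), (θ n q).1 = q.1) ∧
      -- `θ_{n+1} ∘ β̃_n = β̃'_n ∘ θ_n`, where `β̃_n(ω,s) = (β_n ω, s + X_n ω)` etc.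
      (∀ n, ∀ᵐ q ∂((μ n).prod binMeasure),
        θ (n + 1) (β n q.1, q.2 + X n q.1) = (β n (θ n q).1, (θ n q).2 + Y n (θ n q).1)))
    ↔
    (∃ U : ∀ n, Ω n → ZMod 2, (∀ n, Measurable (U n)) ∧
      ∀ n, ∀ᵐ ω ∂(μ n), X n ω + U (n + 1) (β n ω) = Y n ω + U n ω) :=
  stmt_9_general Ω μ β hβ X Y
end

section
/- Let (Ω_n, β_n)_n be an inductive system of probability spaces with binary extension data given by functions X_n, Y_n : Ω_n → {−1,+1}, and suppose there exist measurable functions h_n : Ω_n → 𝕋 = {z ∈ ℂ : |z|=1} with (h_{n+1} ∘ β_n)·X_n = h_n·Y_n a.e. for all n. Then there exist measurable functions U_n : Ω_n → {−1,+1} with (U_{n+1} ∘ β_n)·X_n = U_n·Y_n a.e. for all n. -/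
open MeasureTheory

/-!
Pick a measurable `φ : ℂ → {±1}` that is odd on `ℂ ∖ {0}`: here `φ z = 1` exactly when `(im z, re z)`
is lexicographically positive. Since `X` and `Y` take values `±1`, the cocycle identity says
`h_{n+1} ∘ β_n = ±h_n` pointwise, and oddness of `φ` carries this over to `U_n := φ ∘ h_n`.
-/

noncomputable def lexSign (z : ℂ) : ℝ :=
  if 0 < toLex (z.im, z.re) then 1 else -1

lemma lexSign_eq_neg_one_or_one (z : ℂ) : lexSign z = -1 ∨ lexSign z = 1 := by
  unfold lexSign
  split_ifs <;> simp

lemma measurable_lexSign : Measurable lexSign := by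
  have hpos : {z : ℂ | 0 < toLex (z.im, z.re)} =
      {z | 0 < z.im} ∪ ({z | z.im = 0} ∩ {z | 0 < z.re}) := by
    ext z
    change toLex ((0 : ℝ), (0 : ℝ)) < toLex (z.im, z.re) ↔ _
    simp [Prod.Lex.toLex_lt_toLex, eq_comm]
  refine Measurable.ite ?_ measurable_const measurable_const
  rw [hpos]
  exact (measurableSet_lt measurable_const Complex.measurable_im).union
    ((measurableSet_eq_fun Complex.measurable_im measurable_const).inter
      (measurableSet_lt measurable_const Complex.measurable_re))

lemma lexSign_neg {z : ℂ} (hz : z ≠ 0) : lexSign (-z) = -lexSign z := by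
  have hlex : toLex (z.im, z.re) ≠ 0 := fun h0 ↦
    hz (Complex.ext (congrArg Prod.snd h0) (congrArg Prod.fst h0))
  have hneg : toLex ((-z).im, (-z).re) = -toLex (z.im, z.re) := rfl
  unfold lexSign
  rw [hneg]
  rcases lt_or_gt_of_ne hlex with hlt | hgt
  · simp [hlt.not_gt, neg_pos.mpr hlt]
  · simp [hgt, hgt.not_gt]

lemma lexSign_mul_sign {z : ℂ} (hz : z ≠ 0) {s : ℝ} (hs : s = -1 ∨ s = 1) :
    lexSign (z * s) = lexSign z * s := by
  rcases hs with rfl | rfl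
  · simp [lexSign_neg hz]
  · simp

lemma lexSign_mul_eq_of_mul_eq {a b : ℂ} (hb : b ≠ 0) {x y : ℝ}
    (hx : x = -1 ∨ x = 1) (hy : y = -1 ∨ y = 1) (hab : a * x = b * y) :
    lexSign a * x = lexSign b * y := by
  have hxx : x * x = 1 := by rcases hx with rfl | rfl <;> norm_num
  have hyx : y * x = -1 ∨ y * x = 1 := by
    rcases hx with rfl | rfl <;> rcases hy with rfl | rfl <;> norm_num
  have ha : a = b * ↑(y * x) := by
    have : (x : ℂ) * x = 1 := by exact_mod_cast hxx
    push_cast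
    linear_combination (x : ℂ) * hab - a * this
  rw [ha, lexSign_mul_sign hb hyx, mul_assoc, mul_assoc, hxx, mul_one]

theorem stmt_10_general (Ω : ℕ → Type*) [∀ n, MeasurableSpace (Ω n)]
    (μ : ∀ n, Measure (Ω n))
    (β : ∀ n, Ω n → Ω (n + 1))
    (X Y : ∀ n, Ω n → ℝ)
    (hXv : ∀ n ω, X n ω = -1 ∨ X n ω = 1) (hYv : ∀ n ω, Y n ω = -1 ∨ Y n ω = 1)
    (h : ∀ n, Ω n → ℂ) (hhm : ∀ n, Measurable (h n))
    (hhmod : ∀ n ω, ‖h n ω‖ = 1)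
    (hcoc : ∀ n, ∀ᵐ ω ∂(μ n),
      h (n + 1) (β n ω) * (X n ω : ℂ) = h n ω * (Y n ω : ℂ)) :
    ∃ U : ∀ n, Ω n → ℝ, (∀ n, Measurable (U n)) ∧ (∀ n ω, U n ω = -1 ∨ U n ω = 1) ∧
      ∀ n, ∀ᵐ ω ∂(μ n), U (n + 1) (β n ω) * X n ω = U n ω * Y n ω := by
  refine ⟨fun n ω ↦ lexSign (h n ω), fun n ↦ measurable_lexSign.comp (hhm n),
    fun n ω ↦ lexSign_eq_neg_one_or_one _, fun n ↦ ?_⟩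
  filter_upwards [hcoc n] with ω hω
  have hne : h n ω ≠ 0 := norm_ne_zero_iff.mp (by simp [hhmod])
  exact lexSign_mul_eq_of_mul_eq hne (hXv n ω) (hYv n ω) hω

/-- if a unimodular (𝕋-valued) cocycle transfer function `h` exists between
the `±1`-valued cocycles `X` and `Y`, then a `±1`-valued one `U` exists as well. -/
theorem stmt_10 (Ω : ℕ → Type*) [∀ n, MeasurableSpace (Ω n)]
    (μ : ∀ n, Measure (Ω n)) [∀ n, IsProbabilityMeasure (μ n)]
    (β : ∀ n, Ω n → Ω (n + 1))
    (hβ : ∀ n, MeasurePreserving (β n) (μ n) (μ (n + 1)))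
    (X Y : ∀ n, Ω n → ℝ)
    (hXm : ∀ n, Measurable (X n)) (hYm : ∀ n, Measurable (Y n))
    (hXv : ∀ n ω, X n ω = -1 ∨ X n ω = 1) (hYv : ∀ n ω, Y n ω = -1 ∨ Y n ω = 1)
    (h : ∀ n, Ω n → ℂ) (hhm : ∀ n, Measurable (h n))
    (hhmod : ∀ n ω, ‖h n ω‖ = 1)
    (hcoc : ∀ n, ∀ᵐ ω ∂(μ n),
      h (n + 1) (β n ω) * (X n ω : ℂ) = h n ω * (Y n ω : ℂ)) :
    ∃ U : ∀ n, Ω n → ℝ, (∀ n, Measurable (U n)) ∧ (∀ n ω, U n ω = -1 ∨ U n ω = 1) ∧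
      ∀ n, ∀ᵐ ω ∂(μ n), U (n + 1) (β n ω) * X n ω = U n ω * Y n ω :=
  stmt_10_general Ω μ β X Y hXv hYv h hhm hhmod hcoc
end

section
/- Let μ₁ be a probability measure on ℝ^∞ (infinite sequences of reals), β the shift β(x₁,x₂,…) = (x₂,x₃,…), and for each n let H_n ⊆ L_2(μ₁) be the closed subspace of functions not depending on the n-th coordinate x_n. Suppose U₁ ∈ L_2(μ₁) with |U₁| = 1 a.e., h_k : ℝ → {−1,+1} are Borel, and define ψ_n(x₁,x₂,…) = h_n(x_n) and assume ψ_n = U₁ · (h₁∘π₁)⋯(h_{n−1}∘π_{n−1}) · V_{n+1} a.e. where V_{n+1} depends only on coordinates x_{n+1}, x_{n+2}, …. Then dist(ψ_n, H_n) = dist(U₁, H_n), and dist(U₁, H_n) → 0 as n → ∞. -/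
/-!
Write `ψ_n = U₁ · W` with `W = h₀(x₀)⋯h_{n−1}(x_{n−1}) · V`. Since `W` is unimodular and does not
depend on `x_n`, multiplication by `W` and by its conjugate are isometries of `L²` mapping `H_n`
into itself, so `ψ_n` and `U₁` are equally far from `H_n`.

For the limit, the conditional expectations of `U₁` given the first coordinates lie in the `H_n`
and converge to `U₁` almost everywhere by Lévy's upward theorem; being uniformly bounded, they
converge in `L²` as well.
-/

open MeasureTheory Filter
open scoped ENNReal Topology

/-- `g` does not depend on the `n`-th coordinate. -/
def NotDependOn (n : ℕ) (g : (ℕ → ℝ) → ℂ) : Prop :=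
  ∀ x y : ℕ → ℝ, (∀ k, k ≠ n → x k = y k) → g x = g y

/-- The subspace `H_n ⊆ L₂(μ₁)` of (a.e. classes of) functions not depending on `x_n`
(its metric closure is implicit in `Metric.infDist`). -/
def Hset (μ₁ : Measure (ℕ → ℝ)) (n : ℕ) : Set (Lp ℂ 2 μ₁) :=
  {g : Lp ℂ 2 μ₁ | ∃ g₀ : (ℕ → ℝ) → ℂ, Measurable g₀ ∧ NotDependOn n g₀ ∧
    (g : (ℕ → ℝ) → ℂ) =ᵐ[μ₁] g₀}

namespace MeasureTheory

section Unimodular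

variable {α : Type*} [MeasurableSpace α] {μ : Measure α} {p : ℝ≥0∞} {f W : α → ℂ}

theorem eLpNorm_mul_of_ae_norm_eq_one (hW : ∀ᵐ x ∂μ, ‖W x‖ = 1) :
    eLpNorm (fun x => f x * W x) p μ = eLpNorm f p μ :=
  eLpNorm_congr_norm_ae (by filter_upwards [hW] with x hx; rw [norm_mul, hx, mul_one])

theorem MemLp.mul_of_ae_norm_eq_one (hf : MemLp f p μ)
    (hWm : AEStronglyMeasurable W μ) (hW : ∀ᵐ x ∂μ, ‖W x‖ = 1) : MemLp (fun x => f x * W x) p μ :=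
  ⟨hf.1.mul hWm, by rw [eLpNorm_mul_of_ae_norm_eq_one hW]; exact hf.2⟩

end Unimodular

theorem Filtration.iSup_piLE {ι : Type*} [Preorder ι] {X : ι → Type*}
    [∀ i, MeasurableSpace (X i)] : ⨆ i, piLE (X := X) i = MeasurableSpace.pi := by
  refine le_antisymm (iSup_le piLE.le) (iSup_le fun i => le_iSup_of_le i ?_)
  rw [← measurable_iff_comap_le]
  exact (measurable_pi_apply (X := fun j : Set.Iic i => X j) ⟨i, le_rfl⟩).comp (comap_measurable _)

section Martingale

variable {Ω : Type*} {m0 : MeasurableSpace Ω} {μ : Measure Ω}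

theorem unifIntegrable_of_ae_norm_le {ι β : Type*} [NormedAddCommGroup β] {p : ℝ≥0∞}
    (hp : 1 ≤ p) (hp' : p ≠ ∞) {f : ι → Ω → β} {C : ℝ} (hf : ∀ i, AEStronglyMeasurable (f i) μ)
    (hbdd : ∀ i, ∀ᵐ x ∂μ, ‖f i x‖ ≤ C) : UnifIntegrable f p μ := by
  refine unifIntegrable_of hp hp' hf fun ε hε => ⟨C.toNNReal + 1, fun i => ?_⟩
  have hzero : {x | C.toNNReal + 1 ≤ ‖f i x‖₊}.indicator (f i) =ᵐ[μ] 0 := by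
    filter_upwards [hbdd i] with x hx
    refine Set.indicator_of_notMem (fun hmem => ?_) _
    have : (C.toNNReal : ℝ) + 1 ≤ ‖f i x‖ := by exact_mod_cast hmem
    linarith [C.le_coe_toNNReal]
  rw [eLpNorm_congr_ae hzero, eLpNorm_zero]
  exact zero_le

theorem ae_norm_condExp_le_of_ae_norm_le {E : Type*} [NormedAddCommGroup E] [NormedSpace ℝ E]
    [CompleteSpace E] {m : MeasurableSpace Ω} {f : Ω → E} {C : ℝ}
    (hf : ∀ᵐ x ∂μ, ‖f x‖ ≤ C) : ∀ᵐ x ∂μ, ‖(μ[f | m]) x‖ ≤ C := by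
  have hnorm : ∀ᵐ x ∂μ, |‖f x‖| ≤ C := by simpa only [abs_norm] using hf
  filter_upwards [norm_condExp_le (m := m) f, ae_bdd_abs_condExp_of_ae_bdd_abs (m := m) hnorm]
    with x hle hbdd
  exact hle.trans ((le_abs_self _).trans hbdd)

variable {ℱ : Filtration ℕ m0} [IsFiniteMeasure μ]

theorem Integrable.tendsto_ae_condExp_complex {U : Ω → ℂ} (hU : Integrable U μ)
    (hmeas : StronglyMeasurable[⨆ n, ℱ n] U) :
    ∀ᵐ x ∂μ, Tendsto (fun n => (μ[U | ℱ n]) x) atTop (𝓝 (U x)) := by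
  have hre := hU.re.tendsto_ae_condExp (ℱ := ℱ)
    (Complex.continuous_re.comp_stronglyMeasurable hmeas)
  have him := hU.im.tendsto_ae_condExp (ℱ := ℱ)
    (Complex.continuous_im.comp_stronglyMeasurable hmeas)
  have hre_comm : ∀ᵐ x ∂μ, ∀ n, (μ[U | ℱ n] x).re = μ[fun y => RCLike.re (U y) | ℱ n] x :=
    ae_all_iff.2 fun n => Complex.reCLM.comp_condExp_comm hU
  have him_comm : ∀ᵐ x ∂μ, ∀ n, (μ[U | ℱ n] x).im = μ[fun y => RCLike.im (U y) | ℱ n] x :=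
    ae_all_iff.2 fun n => Complex.imCLM.comp_condExp_comm hU
  filter_upwards [hre, him, hre_comm, him_comm] with x hxre hxim hxre_comm hxim_comm
  have hlim := ((Complex.continuous_ofReal.tendsto _).comp hxre).add
    (((Complex.continuous_ofReal.tendsto _).comp hxim).mul_const Complex.I)
  rw [RCLike.re_to_complex, RCLike.im_to_complex, Complex.re_add_im] at hlim
  refine hlim.congr fun n => ?_
  rw [Function.comp_apply, Function.comp_apply, ← hxre_comm n, ← hxim_comm n, Complex.re_add_im]

theorem tendsto_eLpNorm_condExp_sub_complex {U : Ω → ℂ} {C : ℝ}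
    (hUC : ∀ᵐ x ∂μ, ‖U x‖ ≤ C) (hmeas : StronglyMeasurable[⨆ n, ℱ n] U) {p : ℝ≥0∞}
    (hp : 1 ≤ p) (hp' : p ≠ ∞) :
    Tendsto (fun n => eLpNorm (μ[U | ℱ n] - U) p μ) atTop (𝓝 0) := by
  have hUmem : MemLp U p μ :=
    MemLp.of_bound (hmeas.mono (iSup_le ℱ.le)).aestronglyMeasurable C hUC
  have hcondExp_meas : ∀ n, AEStronglyMeasurable (μ[U | ℱ n]) μ := fun n =>
    (stronglyMeasurable_condExp.mono (ℱ.le n)).aestronglyMeasurable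
  exact tendsto_Lp_finite_of_tendsto_ae hp hp' hcondExp_meas hUmem
    (unifIntegrable_of_ae_norm_le hp hp' hcondExp_meas fun _ =>
      ae_norm_condExp_le_of_ae_norm_le hUC)
    ((hUmem.integrable hp).tendsto_ae_condExp_complex hmeas)

end Martingale

end MeasureTheory

theorem NotDependOn.mul {n : ℕ} {f g : (ℕ → ℝ) → ℂ} (hf : NotDependOn n f)
    (hg : NotDependOn n g) : NotDependOn n (fun x => f x * g x) :=
  fun x y hxy => congrArg₂ (· * ·) (hf x y hxy) (hg x y hxy)

theorem NotDependOn.conj {n : ℕ} {f : (ℕ → ℝ) → ℂ} (hf : NotDependOn n f) :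
    NotDependOn n (fun x => starRingEnd ℂ (f x)) :=
  fun x y hxy => congrArg _ (hf x y hxy)

theorem notDependOn_succ_of_dependsOn_Iic {n : ℕ} {g : (ℕ → ℝ) → ℂ}
    (hg : DependsOn g (Set.Iic n)) : NotDependOn (n + 1) g :=
  fun _ _ hxy => hg fun k hk => hxy k (by rw [Set.mem_Iic] at hk; omega)

theorem zero_mem_Hset (μ : Measure (ℕ → ℝ)) (n : ℕ) : (0 : Lp ℂ 2 μ) ∈ Hset μ n :=
  ⟨fun _ => 0, measurable_const, fun _ _ _ => rfl, Lp.coeFn_zero _ _ _⟩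

section Isometry

variable {μ : Measure (ℕ → ℝ)} {n : ℕ} {ψ U W : (ℕ → ℝ) → ℂ}

theorem infDist_Hset_le_of_ae_eq_mul (hψ : MemLp ψ 2 μ) (hU : MemLp U 2 μ)
    (hWm : Measurable W) (hW : ∀ᵐ x ∂μ, ‖W x‖ = 1) (hWn : NotDependOn n W)
    (hfac : ψ =ᵐ[μ] fun x => U x * W x) :
    Metric.infDist (hψ.toLp ψ) (Hset μ n) ≤ Metric.infDist (hU.toLp U) (Hset μ n) := by
  have : Nonempty (Hset μ n) := ⟨⟨0, zero_mem_Hset μ n⟩⟩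
  rw [Metric.infDist_eq_iInf (x := hU.toLp U)]
  refine le_ciInf fun ⟨g, g₀, hg₀m, hg₀n, hgg₀⟩ => ?_
  have hg₀ : MemLp g₀ 2 μ := (Lp.memLp g).ae_eq hgg₀
  have hg₀W : MemLp (fun x => g₀ x * W x) 2 μ :=
    hg₀.mul_of_ae_norm_eq_one hWm.aestronglyMeasurable hW
  have hmem : hg₀W.toLp _ ∈ Hset μ n := ⟨_, hg₀m.mul hWm, hg₀n.mul hWn, hg₀W.coeFn_toLp⟩
  have hsub : ψ - (fun x => g₀ x * W x) =ᵐ[μ] fun x => (U - g₀) x * W x := by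
    filter_upwards [hfac] with x hx
    rw [Pi.sub_apply, hx, Pi.sub_apply, sub_mul]
  calc Metric.infDist (hψ.toLp ψ) (Hset μ n) ≤ dist (hψ.toLp ψ) (hg₀W.toLp _) :=
        Metric.infDist_le_dist_of_mem hmem
    _ = dist (hU.toLp U) (hg₀.toLp g₀) := by
        rw [dist_edist, dist_edist, Lp.edist_toLp_toLp, Lp.edist_toLp_toLp,
          eLpNorm_congr_ae hsub, eLpNorm_mul_of_ae_norm_eq_one hW]
    _ = dist (hU.toLp U) g := by
        rw [MemLp.toLp_congr hg₀ (Lp.memLp g) hgg₀.symm, Lp.toLp_coeFn]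

theorem infDist_Hset_eq_of_ae_eq_mul (hψ : MemLp ψ 2 μ) (hU : MemLp U 2 μ)
    (hWm : Measurable W) (hW : ∀ᵐ x ∂μ, ‖W x‖ = 1) (hWn : NotDependOn n W)
    (hfac : ψ =ᵐ[μ] fun x => U x * W x) :
    Metric.infDist (hψ.toLp ψ) (Hset μ n) = Metric.infDist (hU.toLp U) (Hset μ n) := by
  have hW' : ∀ᵐ x ∂μ, ‖starRingEnd ℂ (W x)‖ = 1 := by
    filter_upwards [hW] with x hx; rwa [Complex.norm_conj]
  have hfac' : U =ᵐ[μ] fun x => ψ x * starRingEnd ℂ (W x) := by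
    filter_upwards [hfac, hW] with x hx hWx
    rw [hx, mul_assoc, Complex.mul_conj', hWx]; simp
  exact le_antisymm (infDist_Hset_le_of_ae_eq_mul hψ hU hWm hW hWn hfac)
    (infDist_Hset_le_of_ae_eq_mul hU hψ (Complex.continuous_conj.measurable.comp hWm) hW'
      hWn.conj hfac')

end Isometry

theorem tendsto_infDist_Hset {μ : Measure (ℕ → ℝ)} [IsFiniteMeasure μ] {U : (ℕ → ℝ) → ℂ}
    (hU : Measurable U) {C : ℝ} (hUC : ∀ᵐ x ∂μ, ‖U x‖ ≤ C) (hUmem : MemLp U 2 μ) :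
    Tendsto (fun n => Metric.infDist (hUmem.toLp U) (Hset μ n)) atTop (𝓝 0) := by
  let ℱ : Filtration ℕ MeasurableSpace.pi := Filtration.piLE (X := fun _ : ℕ => ℝ)
  have hmeas : StronglyMeasurable[⨆ n, ℱ n] U := by
    rw [Filtration.iSup_piLE]; exact hU.stronglyMeasurable
  have hL2 :=
    tendsto_eLpNorm_condExp_sub_complex (ℱ := ℱ) hUC hmeas one_le_two ENNReal.ofNat_ne_top
  -- `ℱ n` sees the coordinates `x₀, …, xₙ`, so `μ[U | ℱ n]` lies in `H_{n+1}`.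
  rw [← tendsto_add_atTop_iff_nat 1]
  refine squeeze_zero (fun _ => Metric.infDist_nonneg) (fun n => ?_)
    (by simpa using (ENNReal.tendsto_toReal ENNReal.zero_ne_top).comp hL2)
  have hg : StronglyMeasurable[ℱ n] (μ[U | ℱ n]) := stronglyMeasurable_condExp
  have hgmem : MemLp (μ[U | ℱ n]) 2 μ := hUmem.condExp one_le_two
  have hmem : hgmem.toLp _ ∈ Hset μ (n + 1) :=
    ⟨_, (hg.mono (ℱ.le n)).measurable, notDependOn_succ_of_dependsOn_Iic hg.dependsOn_of_piLE,
      hgmem.coeFn_toLp⟩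
  calc Metric.infDist (hUmem.toLp U) (Hset μ (n + 1)) ≤ dist (hUmem.toLp U) (hgmem.toLp _) :=
        Metric.infDist_le_dist_of_mem hmem
    _ = (eLpNorm (μ[U | ℱ n] - U) 2 μ).toReal := by
        rw [dist_edist, Lp.edist_toLp_toLp, eLpNorm_sub_comm]

theorem infDist_Hset_sign_eq_of_factorization {μ : Measure (ℕ → ℝ)} {U : (ℕ → ℝ) → ℂ}
    (hU : ∀ᵐ x ∂μ, ‖U x‖ = 1) (hUmem : MemLp U 2 μ) {h : ℕ → ℝ → ℝ}
    (hhmeas : ∀ k, Measurable (h k)) {n : ℕ} (hhn : ∀ t, h n t = -1 ∨ h n t = 1)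
    (hψ : MemLp (fun x : ℕ → ℝ => ((h n (x n) : ℝ) : ℂ)) 2 μ) {V : (ℕ → ℝ) → ℂ}
    (hVm : Measurable V) (hVdep : ∀ x y : ℕ → ℝ, (∀ k, n + 1 ≤ k → x k = y k) → V x = V y)
    (hfac : ∀ᵐ x ∂μ, ((h n (x n) : ℝ) : ℂ)
      = U x * (∏ k ∈ Finset.range n, ((h k (x k) : ℝ) : ℂ)) * V x) :
    Metric.infDist (hψ.toLp _) (Hset μ n) = Metric.infDist (hUmem.toLp U) (Hset μ n) := by
  set W : (ℕ → ℝ) → ℂ := fun x => (∏ k ∈ Finset.range n, ((h k (x k) : ℝ) : ℂ)) * V x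
  have hWm : Measurable W :=
    (Finset.measurable_prod _ fun k _ =>
      Complex.measurable_ofReal.comp ((hhmeas k).comp (measurable_pi_apply k))).mul hVm
  have hWn : NotDependOn n W := fun x y hxy => by
    simp only [W]
    rw [Finset.prod_congr rfl fun k hk => by rw [hxy k (Finset.mem_range.1 hk).ne],
      hVdep x y fun k hk => hxy k (by omega)]
  have hψW : (fun x : ℕ → ℝ => ((h n (x n) : ℝ) : ℂ)) =ᵐ[μ] fun x => U x * W x := by
    filter_upwards [hfac] with x hx
    rw [hx, mul_assoc]
  have hW : ∀ᵐ x ∂μ, ‖W x‖ = 1 := by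
    filter_upwards [hψW, hU] with x hx hUx
    have hψx : ‖((h n (x n) : ℝ) : ℂ)‖ = 1 := by rcases hhn (x n) with h' | h' <;> simp [h']
    rwa [hx, norm_mul, hUx, one_mul] at hψx
  exact infDist_Hset_eq_of_ae_eq_mul hψ hUmem hWm hW hWn hψW

/-- if `ψ_n(x) = h_n(x_n)` factorizes as
`ψ_n = U₁ · h₀(x₀)⋯h_{n−1}(x_{n−1}) · V` with `|U₁| = 1` a.e. and `V` depending only on
the coordinates `x_{n+1}, x_{n+2}, …`, then `dist(ψ_n, H_n) = dist(U₁, H_n)` for all `n`,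
and `dist(U₁, H_n) → 0`. -/
theorem stmt_14 (μ₁ : Measure (ℕ → ℝ)) [IsProbabilityMeasure μ₁]
    (U₁ : (ℕ → ℝ) → ℂ) (hU₁meas : Measurable U₁)
    (hU₁mod : ∀ᵐ x ∂μ₁, ‖U₁ x‖ = 1)
    (hU₁mem : MemLp U₁ 2 μ₁)
    (h : ℕ → ℝ → ℝ) (hhmeas : ∀ k, Measurable (h k))
    (hhval : ∀ k x, h k x = -1 ∨ h k x = 1)
    (hψmem : ∀ n, MemLp (fun x : ℕ → ℝ => ((h n (x n) : ℝ) : ℂ)) 2 μ₁)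
    (hfact : ∀ n, ∃ V : (ℕ → ℝ) → ℂ, Measurable V ∧
      (∀ x y : ℕ → ℝ, (∀ k, n + 1 ≤ k → x k = y k) → V x = V y) ∧
      ∀ᵐ x ∂μ₁, ((h n (x n) : ℝ) : ℂ)
        = U₁ x * (∏ k ∈ Finset.range n, ((h k (x k) : ℝ) : ℂ)) * V x) :
    (∀ n, Metric.infDist (MemLp.toLp _ (hψmem n)) (Hset μ₁ n)
        = Metric.infDist (MemLp.toLp U₁ hU₁mem) (Hset μ₁ n)) ∧
      Tendsto (fun n => Metric.infDist (MemLp.toLp U₁ hU₁mem) (Hset μ₁ n))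
        atTop (nhds 0) := by
  refine ⟨fun n => ?_, tendsto_infDist_Hset hU₁meas (hU₁mod.mono fun _ hx => hx.le) hU₁mem⟩
  obtain ⟨V, hVm, hVdep, hVfac⟩ := hfact n
  exact infDist_Hset_sign_eq_of_factorization hU₁mod hU₁mem hhmeas (hhval n) (hψmem n) hVm hVdep
    hVfac
end

section
/- Let (Ω̃_k, γ_k) be binary extensions of probability spaces Ω_k for k = 1,2, let Ω = Ω₁ × Ω₂, A ⊆ Ω measurable, and let (Ω̃, γ) be the product binary extension according to A. Then the natural map α : Ω̃₁ × Ω̃₂ → Ω̃ defined by α(ω̃₁,ω̃₂) = (ω̃₁, γ₂(ω̃₂)) if (γ₁(ω̃₁), γ₂(ω̃₂)) ∈ A and α(ω̃₁,ω̃₂) = (γ₁(ω̃₁), ω̃₂) otherwise, is measure preserving, and the induced embedding L₂(Ω̃) ⊆ L₂(Ω̃₁) ⊗ L₂(Ω̃₂) restricts on L₂(Ω) to the tensor product of the embeddings L₂(Ω_k) ⊆ L₂(Ω̃_k). -/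
/-!
After regrouping `Ω̃₁ × Ω̃₂` as `Ω × {±1}²`, the map `α` is a skew product over the identity of
`Ω`: on each fibre it keeps one of the two independent signs, chosen according to whether the
base point lies in `A`, and either choice pushes the uniform measure on pairs of signs forward to
the uniform measure on one sign. The compatibility with `L₂(Ω)` holds pointwise, since `α` does
not move the base point.
-/

open MeasureTheory
open scoped Classical

/-- The natural map `α : Ω̃₁ × Ω̃₂ → Ω̃` onto the product binary extension (realized as
`(Ω₁ × Ω₂) × {±1}`): over `A` the sign of the first factor is kept, off `A` that of the
second. -/
noncomputable def prodAlpha {Ω₁ Ω₂ : Type*} (A : Set (Ω₁ × Ω₂)) :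
    (Ω₁ × ZMod 2) × (Ω₂ × ZMod 2) → (Ω₁ × Ω₂) × ZMod 2 :=
  fun p => ((p.1.1, p.2.1), if (p.1.1, p.2.1) ∈ A then p.1.2 else p.2.2)

theorem measurePreserving_prodProdProdComm {α β γ δ : Type*}
    [MeasurableSpace α] [MeasurableSpace β] [MeasurableSpace γ] [MeasurableSpace δ]
    (μa : Measure α) (μb : Measure β) (μc : Measure γ) (μd : Measure δ)
    [SFinite μa] [SFinite μb] [SFinite μc] [SFinite μd] :
    MeasurePreserving (Equiv.prodProdProdComm α β γ δ)
      ((μa.prod μb).prod (μc.prod μd)) ((μa.prod μc).prod (μb.prod μd)) :=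
  (measurePreserving_prodAssoc μa μc (μb.prod μd)).symm MeasurableEquiv.prodAssoc
    |>.comp ((MeasurePreserving.id μa).prod (measurePreserving_prodAssoc μc μb μd))
    |>.comp ((MeasurePreserving.id μa).prod
      (Measure.measurePreserving_swap.prod (MeasurePreserving.id μd)))
    |>.comp ((MeasurePreserving.id μa).prod
      ((measurePreserving_prodAssoc μb μc μd).symm MeasurableEquiv.prodAssoc))
    |>.comp (measurePreserving_prodAssoc μa μb (μc.prod μd))

theorem measurePreserving_ite_mem_fst_snd {α β : Type*} [MeasurableSpace α] [MeasurableSpace β]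
    (μ : Measure α) (ν : Measure β) [SFinite μ] [IsProbabilityMeasure ν]
    {A : Set α} (hA : MeasurableSet A) :
    MeasurePreserving (fun p : α × (β × β) => (p.1, if p.1 ∈ A then p.2.1 else p.2.2))
      (μ.prod (ν.prod ν)) (μ.prod ν) := by
  have hsel : Measurable (Function.uncurry
      fun (a : α) (s : β × β) => if a ∈ A then s.1 else s.2) :=
    Measurable.ite (measurable_fst hA) measurable_snd.fst measurable_snd.snd
  refine (MeasurePreserving.id μ).skew_product hsel (Filter.Eventually.of_forall fun a => ?_)
  by_cases ha : a ∈ A <;> simp [ha]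

/-- `α` is measure preserving, and the induced embedding
`L₂(Ω̃) ⊆ L₂(Ω̃₁) ⊗ L₂(Ω̃₂)` restricts on `L₂(Ω)` to the tensor product of the two
embeddings `L₂(Ω_k) ⊆ L₂(Ω̃_k)` (the composite map `Ω̃₁ × Ω̃₂ → Ω̃ → Ω` is `γ₁ × γ₂`). -/
theorem stmt_17 {Ω₁ Ω₂ : Type*} [MeasurableSpace Ω₁] [MeasurableSpace Ω₂]
    (μ₁ : Measure Ω₁) (μ₂ : Measure Ω₂)
    [IsProbabilityMeasure μ₁] [IsProbabilityMeasure μ₂]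
    (A : Set (Ω₁ × Ω₂)) (hA : MeasurableSet A) :
    MeasurePreserving (prodAlpha A)
      ((μ₁.prod binMeasure).prod (μ₂.prod binMeasure)) ((μ₁.prod μ₂).prod binMeasure) ∧
    ∀ g : Ω₁ × Ω₂ → ℂ,
      ((fun q : (Ω₁ × Ω₂) × ZMod 2 => g q.1) ∘ prodAlpha A)
        = fun p : (Ω₁ × ZMod 2) × (Ω₂ × ZMod 2) => g (p.1.1, p.2.1) :=
  ⟨(measurePreserving_ite_mem_fst_snd (μ₁.prod μ₂) binMeasure hA).comp
      (measurePreserving_prodProdProdComm μ₁ binMeasure μ₂ binMeasure),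
    fun _ => rfl⟩
end

section
/- Let X ~ N((a+b)/2, ε/2) on ℝ (a,b > 0, ε > 0), with density p_X(x) = (πε)^{−1/2} exp(−(x−(a+b)/2)²/ε). Suppose A is an event with conditional probability P(A | X = x) = (1 − e^{−2ax/ε})(1 − e^{−2bx/ε}) for x > 0 (and 0 for x ≤ 0), and P(A) = 1 − e^{−ab/ε} > 0. Then the conditional density of X given A is x ↦ ((1 − e^{−2ax/ε})(1 − e^{−2bx/ε})/(1 − e^{−ab/ε})) · (πε)^{−1/2} exp(−(x − (a+b)/2)²/ε) for x > 0, i.e. this function is a probability density (integrates to 1 over (0,∞)). -/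
/-!
Expanding the product, `(1 - e^{-2ax/ε})(1 - e^{-2bx/ε})` times the `N((a+b)/2, ε/2)` density is a
signed sum of four Gaussian densities: multiplying a Gaussian density by an exponential only shifts
its mean (completing the square), up to a constant factor. The four means are `±(a+b)/2` and
`±(b-a)/2`, with factors `1` and `-e^{-ab/ε}`. For a pair of densities with opposite means, the
masses of `(0, ∞)` add up to `1` by the reflection `x ↦ -x`; this is the reflection principle.
-/

open Real MeasureTheory Set ProbabilityTheory
open scoped NNReal

namespace ProbabilityTheory

lemma gaussianPDFReal_neg_mean (μ : ℝ) (v : ℝ≥0) (x : ℝ) :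
    gaussianPDFReal (-μ) v x = gaussianPDFReal μ v (-x) := by
  simp only [gaussianPDFReal]
  ring_nf

lemma setIntegral_Ioi_gaussianPDFReal_add_neg_mean (μ : ℝ) {v : ℝ≥0} (hv : v ≠ 0) :
    (∫ x in Ioi 0, gaussianPDFReal μ v x) + ∫ x in Ioi 0, gaussianPDFReal (-μ) v x = 1 := by
  have hint := integrable_gaussianPDFReal μ v
  simp_rw [gaussianPDFReal_neg_mean]
  rw [integral_comp_neg_Ioi 0 (gaussianPDFReal μ v), neg_zero, add_comm,
    intervalIntegral.integral_Iic_add_Ioi hint.integrableOn hint.integrableOn,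
    integral_gaussianPDFReal_eq_one μ hv]

lemma exp_mul_gaussianPDFReal (c μ : ℝ) (v : ℝ≥0) (x : ℝ) :
    exp (-c * x / v) * gaussianPDFReal μ v x =
      exp ((c ^ 2 - 2 * c * μ) / (2 * v)) * gaussianPDFReal (μ - c) v x := by
  rcases eq_or_ne v 0 with rfl | hv
  · simp [gaussianPDFReal_zero_var]
  have hv' : (v : ℝ) ≠ 0 := by exact_mod_cast hv
  simp only [gaussianPDFReal]
  rw [mul_left_comm, ← exp_add, mul_left_comm _ (√(2 * π * v))⁻¹, ← exp_add]
  congr 2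
  field_simp
  ring

lemma setIntegral_Ioi_one_sub_exp_mul_one_sub_exp_mul_gaussianPDFReal (a b : ℝ) {v : ℝ≥0}
    (hv : v ≠ 0) :
    ∫ x in Ioi 0, (1 - exp (-a * x / v)) * (1 - exp (-b * x / v)) *
        gaussianPDFReal ((a + b) / 2) v x = 1 - exp (-(a * b) / (2 * v)) := by
  set κ := exp (-(a * b) / (2 * v))
  have hg (μ : ℝ) : IntegrableOn (gaussianPDFReal μ v) (Ioi 0) :=
    (integrable_gaussianPDFReal μ v).integrableOn
  have expand (x : ℝ) :
      (1 - exp (-a * x / v)) * (1 - exp (-b * x / v)) * gaussianPDFReal ((a + b) / 2) v x =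
        gaussianPDFReal ((a + b) / 2) v x - κ * gaussianPDFReal ((b - a) / 2) v x -
          κ * gaussianPDFReal (-((b - a) / 2)) v x + gaussianPDFReal (-((a + b) / 2)) v x := by
    have ha := exp_mul_gaussianPDFReal a ((a + b) / 2) v x
    have hb := exp_mul_gaussianPDFReal b ((a + b) / 2) v x
    have hab := exp_mul_gaussianPDFReal (a + b) ((a + b) / 2) v x
    have hexp : exp (-(a + b) * x / v) = exp (-a * x / v) * exp (-b * x / v) := by
      rw [← exp_add]; ring_nf
    rw [show a ^ 2 - 2 * a * ((a + b) / 2) = -(a * b) by ring,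
      show (a + b) / 2 - a = (b - a) / 2 by ring] at ha
    rw [show b ^ 2 - 2 * b * ((a + b) / 2) = -(a * b) by ring,
      show (a + b) / 2 - b = -((b - a) / 2) by ring] at hb
    rw [hexp, show (a + b) ^ 2 - 2 * (a + b) * ((a + b) / 2) = 0 by ring, zero_div, exp_zero,
      one_mul, show (a + b) / 2 - (a + b) = -((a + b) / 2) by ring] at hab
    linear_combination -ha - hb + hab
  have hsym (μ : ℝ) := setIntegral_Ioi_gaussianPDFReal_add_neg_mean μ hv
  rw [integral_congr_ae (Filter.Eventually.of_forall expand), integral_add ?_ (hg _),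
    integral_sub ?_ ((hg _).const_mul κ), integral_sub (hg _) ((hg _).const_mul κ),
    integral_const_mul, integral_const_mul]
  · linear_combination hsym ((a + b) / 2) - κ * hsym ((b - a) / 2)
  · exact (hg _).sub ((hg _).const_mul κ)
  · exact ((hg _).sub ((hg _).const_mul κ)).sub ((hg _).const_mul κ)

lemma gaussianPDFReal_half_variance (μ : ℝ) {ε : ℝ} (hε : 0 ≤ ε) (x : ℝ) :
    gaussianPDFReal μ (ε / 2).toNNReal x = (√(π * ε))⁻¹ * exp (-(x - μ) ^ 2 / ε) := by
  rw [gaussianPDFReal, Real.coe_toNNReal _ (by positivity)]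
  ring_nf

end ProbabilityTheory

/-- Bayes computation of Lemma 6.2: the function
`x ↦ ((1 − e^{−2ax/ε})(1 − e^{−2bx/ε})/(1 − e^{−ab/ε})) · (πε)^{−1/2} exp(−(x−(a+b)/2)²/ε)`
is a probability density on `(0,∞)`, i.e. it integrates to `1`; equivalently
`∫₀^∞ (1 − e^{−2ax/ε})(1 − e^{−2bx/ε}) (πε)^{−1/2} exp(−(x−(a+b)/2)²/ε) dx = 1 − e^{−ab/ε}`,
and the normalizing constant `P(A) = 1 − e^{−ab/ε}` is positive. -/
theorem stmt_19 (a b ε : ℝ) (ha : 0 < a) (hb : 0 < b) (hε : 0 < ε) :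
    (0 < 1 - Real.exp (-(a * b) / ε)) ∧
    ∫ x in Set.Ioi (0 : ℝ),
        ((1 - Real.exp (-2 * a * x / ε)) * (1 - Real.exp (-2 * b * x / ε)) /
            (1 - Real.exp (-(a * b) / ε))) *
          ((Real.sqrt (Real.pi * ε))⁻¹ * Real.exp (-(x - (a + b) / 2) ^ 2 / ε)) = 1 := by
  have hP : 0 < 1 - exp (-(a * b) / ε) :=
    sub_pos.mpr (exp_lt_one_iff.mpr (div_neg_of_neg_of_pos (by simpa using mul_pos ha hb) hε))
  refine ⟨hP, ?_⟩
  set v := (ε / 2).toNNReal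
  have hv_coe : (v : ℝ) = ε / 2 := Real.coe_toNNReal _ (by positivity)
  have hv : v ≠ 0 := fun h ↦ by linarith [Real.toNNReal_eq_zero.mp h]
  have h := setIntegral_Ioi_one_sub_exp_mul_one_sub_exp_mul_gaussianPDFReal a b hv
  have hscale (c x : ℝ) : -c * x / (v : ℝ) = -2 * c * x / ε := by rw [hv_coe]; ring
  have hκ : -(a * b) / (2 * (v : ℝ)) = -(a * b) / ε := by rw [hv_coe]; ring
  simp only [hscale, hκ, v, gaussianPDFReal_half_variance _ hε.le] at h
  simp_rw [div_mul_eq_mul_div, integral_div, h, div_self hP.ne']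
end
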